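/- Let A be a formally real integral domain which is an ℝ-algebra. Let I₀, M₀ be ℝ-linearly independent imaginary units with a, b, J₀, K₀ as in Notation 5.1, and assume a ≠ 0 (I₀ and M₀ not orthogonal). Let h = h₀ + h₁·ι(I₀) with h₀, h₁ ∈ A, h₁ ≠ 0, set h^s := h₀² + h₁², and let f ∈ Quaternion A be not I₀-sliced. Then h * f * star h is M₀-sliced if and only if there exist f₀, ρ, u, w ∈ A with h^s·u = ρ·(h₀² − h₁²), h^s·w = ρ·h₀·h₁, and f = f₀ + a·ρ·ι(I₀) + b·u·ι(J₀) − 2b·w·ι(K₀) (real scalars acting via algebraMap ℝ A). (Theorem 5.6, case (ii).) -/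

import Mathlib

open Quaternion

/-- The componentwise extension `ι : ℍ[ℝ] → ℍ[A]` of `algebraMap ℝ A`. -/
noncomputable def qmap {A : Type*} [CommRing A] [Algebra ℝ A] (q : Quaternion ℝ) :
    Quaternion A :=
  ⟨algebraMap ℝ A q.re, algebraMap ℝ A q.imI, algebraMap ℝ A q.imJ, algebraMap ℝ A q.imK⟩

/-- An imaginary unit: a real quaternion with zero real part squaring to `-1`. -/
def IsImaginaryUnit (I : Quaternion ℝ) : Prop := I.re = 0 ∧ I ^ 2 = -1

/-- `q` is `I`-sliced if `q = a + b·ι(I)` for some `a, b ∈ A`. -/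
noncomputable def IsSliced {A : Type*} [CommRing A] [Algebra ℝ A]
    (I : Quaternion ℝ) (q : Quaternion A) : Prop :=
  ∃ a b : A, q = (a : Quaternion A) + (b : Quaternion A) * qmap I

/-- `A` is formally real: a sum of four squares vanishes only trivially. -/
def FormallyRealFour (A : Type*) [CommRing A] : Prop :=
  ∀ a b c d : A, a ^ 2 + b ^ 2 + c ^ 2 + d ^ 2 = 0 → a = 0 ∧ b = 0 ∧ c = 0 ∧ d = 0


/-!
Write `I₀ M₀ + M₀ I₀ = -2a`. The element `K₀ = (I₀ M₀ + a)/b` squares to `(a² - 1)/b² = -1`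
and anticommutes with `I₀`, so `I₀, J₀ = K₀ I₀, K₀` is a quaternionic frame with
`M₀ = a I₀ + b J₀`. By dimension count over `ℝ` the frame spans `ℍ[ℝ]`, hence after extending
scalars to `A` every `f ∈ ℍ[A]` has unique coordinates `f = c₀ + c₁ I₀ + c₂ J₀ + c₃ K₀` with
`cᵢ ∈ A`. Conjugation by `h = h₀ + h₁ I₀` multiplies `c₀, c₁` by `hˢ = h₀² + h₁²` (nonzero, as
`A` is formally real) and rotates `(c₂, c₃)` by `[[h₀² - h₁², -2h₀h₁], [2h₀h₁, h₀² - h₁²]]`, so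
`h f hᶜ` is `M₀`-sliced iff the new `(c₁, c₂, c₃)` is an `A`-multiple of `(a, b, 0)`. Solving this
linear system over the domain `A` gives the stated normal form.
-/

open QuaternionAlgebra (Basis)

section qmap

variable {A : Type*} [CommRing A] [Algebra ℝ A] (p q : ℍ[ℝ])

@[simp] lemma re_qmap : (qmap q : ℍ[A]).re = algebraMap ℝ A q.re := rfl
@[simp] lemma imI_qmap : (qmap q : ℍ[A]).imI = algebraMap ℝ A q.imI := rfl
@[simp] lemma imJ_qmap : (qmap q : ℍ[A]).imJ = algebraMap ℝ A q.imJ := rfl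
@[simp] lemma imK_qmap : (qmap q : ℍ[A]).imK = algebraMap ℝ A q.imK := rfl

theorem qmap_mul : (qmap (p * q) : ℍ[A]) = qmap p * qmap q := by
  ext <;> simp

end qmap

section UnitPair

variable {R : Type*} [Ring R] [Algebra ℝ R] {I M K : R} {a b : ℝ}

theorem commutator_eq_two_smul (hIM : I * M + M * I = (-(2 * a)) • 1) :
    I * M - M * I = (2 : ℝ) • (I * M + a • 1) := by
  rw [eq_sub_of_add_eq' hIM]
  module

theorem eq_inv_smul_of_eq_commutator (hIM : I * M + M * I = (-(2 * a)) • 1)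
    (hK : K = (2 * b)⁻¹ • (I * M - M * I)) : K = b⁻¹ • (I * M + a • 1) := by
  rw [hK, commutator_eq_two_smul hIM, smul_smul]
  congr 1
  ring

theorem mul_add_smul_one_mul_self (hI : I * I = -1) (hM : M * M = -1)
    (hIM : I * M + M * I = (-(2 * a)) • 1) :
    (I * M + a • 1) * (I * M + a • 1) = (a ^ 2 - 1) • (1 : R) := by
  calc (I * M + a • 1) * (I * M + a • 1)
      = I * (M * I) * M + (2 * a) • (I * M) + (a ^ 2) • 1 := by
        simp only [add_mul, mul_add, smul_mul_assoc, mul_smul_comm, one_mul, mul_one, mul_assoc]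
        module
    _ = (a ^ 2 - 1) • (1 : R) := by
        rw [eq_sub_of_add_eq' hIM]
        simp only [mul_sub, sub_mul, mul_smul_comm, smul_mul_assoc, mul_one, ← mul_assoc, hI]
        simp only [mul_assoc, hM, neg_mul_neg, one_mul]
        module

theorem mul_mul_add_smul_one (hI : I * I = -1) : I * (I * M + a • 1) = a • I - M := by
  rw [mul_add, ← mul_assoc, hI, mul_smul_comm, mul_one, neg_one_mul]
  abel

theorem mul_add_smul_one_mul (hI : I * I = -1) (hIM : I * M + M * I = (-(2 * a)) • 1) :
    (I * M + a • 1) * I = M - a • I := by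
  rw [add_mul, mul_assoc, eq_sub_of_add_eq' hIM, mul_sub, ← mul_assoc I I, hI, mul_smul_comm,
    smul_mul_assoc, mul_one, one_mul, neg_one_mul]
  module

theorem sub_smul_mul_self (hI : I * I = -1) (hM : M * M = -1)
    (hIM : I * M + M * I = (-(2 * a)) • 1) :
    (M - a • I) * (M - a • I) = (a ^ 2 - 1) • (1 : R) := by
  simp only [sub_mul, mul_sub, smul_mul_assoc, mul_smul_comm, hI, hM, eq_sub_of_add_eq' hIM]
  module

theorem mul_self_eq_neg_one_of_eq_commutator (hI : I * I = -1) (hM : M * M = -1)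
    (hIM : I * M + M * I = (-(2 * a)) • 1) (hK : K = (2 * b)⁻¹ • (I * M - M * I))
    (hb : b ≠ 0) (hb2 : b ^ 2 = 1 - a ^ 2) : K * K = -1 := by
  rw [eq_inv_smul_of_eq_commutator hIM hK, smul_mul_smul_comm,
    mul_add_smul_one_mul_self hI hM hIM, smul_smul, ← neg_one_smul ℝ (1 : R)]
  congr 1
  field_simp
  linear_combination hb2

theorem mul_eq_neg_mul_of_eq_commutator (hI : I * I = -1) (hIM : I * M + M * I = (-(2 * a)) • 1)
    (hK : K = (2 * b)⁻¹ • (I * M - M * I)) : I * K = -(K * I) := by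
  rw [eq_inv_smul_of_eq_commutator hIM hK, mul_smul_comm, smul_mul_assoc,
    mul_mul_add_smul_one hI, mul_add_smul_one_mul hI hIM, ← smul_neg, neg_sub]

theorem eq_smul_add_smul_of_eq_commutator (hI : I * I = -1)
    (hIM : I * M + M * I = (-(2 * a)) • 1) (hK : K = (2 * b)⁻¹ • (I * M - M * I))
    (hb : b ≠ 0) : M = a • I + b • (K * I) := by
  rw [eq_inv_smul_of_eq_commutator hIM hK, smul_mul_assoc, mul_add_smul_one_mul hI hIM,
    smul_smul, mul_inv_cancel₀ hb, one_smul]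
  abel

end UnitPair

def QuaternionAlgebra.Basis.ofAnticomm {S R : Type*} [CommRing S] [Ring R] [Algebra S R]
    {I K : R} (hI : I * I = -1) (hK : K * K = -1) (hIK : I * K = -(K * I)) :
    Basis R (-1 : S) 0 (-1) where
  i := I
  j := K * I
  k := K
  i_mul_i := by rw [hI]; simp
  j_mul_j := by
    rw [mul_assoc, ← mul_assoc I, hIK, neg_mul, mul_neg, mul_assoc, hI, ← mul_assoc, hK]
    simp
  i_mul_j := by rw [← mul_assoc, hIK, neg_mul, mul_assoc, hI]; simp
  j_mul_i := by rw [mul_assoc, hI]; simp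

theorem Quaternion.mul_add_mul_of_re_eq_zero {R : Type*} [CommRing R] {p q : ℍ[R]}
    (hp : p.re = 0) (hq : q.re = 0) :
    p * q + q * p = (-(2 * (p.imI * q.imI + p.imJ * q.imJ + p.imK * q.imK))) • (1 : ℍ[R]) := by
  ext <;> simp [hp, hq] <;> ring

theorem IsImaginaryUnit.mul_self {I : ℍ[ℝ]} (hI : IsImaginaryUnit I) : I * I = -1 :=
  pow_two I ▸ hI.2

theorem one_sub_sq_pos {I M : ℍ[ℝ]} {a : ℝ} (hI : IsImaginaryUnit I) (hM : IsImaginaryUnit M)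
    (hind : LinearIndependent ℝ ![I, M]) (hIM : I * M + M * I = (-(2 * a)) • 1) :
    0 < 1 - a ^ 2 := by
  have hne : M - a • I ≠ 0 := by
    rw [sub_ne_zero]
    exact ((LinearIndependent.pair_iff' (by rintro rfl; simpa using hI.2)).mp hind a).symm
  have hsq := sub_smul_mul_self hI.mul_self hM.mul_self hIM
  rw [← sq, sq_eq_neg_normSq.mpr (by simp [hI.1, hM.1]), ← Algebra.algebraMap_eq_smul_one,
    neg_eq_iff_eq_neg, ← map_neg, algebraMap_def, coe_inj, neg_sub] at hsq
  exact hsq ▸ normSq_nonneg.lt_of_ne' (normSq_ne_zero.mpr hne)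

theorem FormallyRealFour.sq_add_sq_ne_zero {A : Type*} [CommRing A] (hA : FormallyRealFour A)
    {x y : A} (hy : y ≠ 0) : x ^ 2 + y ^ 2 ≠ 0 :=
  fun h => hy (hA x y 0 0 (by simpa using h)).2.1

namespace QuaternionAlgebra

theorem mk_mul_mul_star_mk {R : Type*} [CommRing R] (h₀ h₁ : R) (x : ℍ[R,-1,0,-1]) :
    ⟨h₀, h₁, 0, 0⟩ * x * star ⟨h₀, h₁, 0, 0⟩ =
      (⟨(h₀ ^ 2 + h₁ ^ 2) * x.re, (h₀ ^ 2 + h₁ ^ 2) * x.imI,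
        (h₀ ^ 2 - h₁ ^ 2) * x.imJ - 2 * h₀ * h₁ * x.imK,
        (h₀ ^ 2 - h₁ ^ 2) * x.imK + 2 * h₀ * h₁ * x.imJ⟩ : ℍ[R,-1,0,-1]) := by
  ext <;> simp <;> ring

theorem exists_mk_mul_mul_star_mk_eq_iff {A : Type*} [CommRing A] [IsDomain A]
    {a b h₀ h₁ : A} (ha : IsUnit a) (hb : IsUnit (2 * b)) (hs : h₀ ^ 2 + h₁ ^ 2 ≠ 0)
    (c : ℍ[A,-1,0,-1]) :
    (∃ α β : A, ⟨h₀, h₁, 0, 0⟩ * c * star ⟨h₀, h₁, 0, 0⟩ = (⟨α, β * a, β * b, 0⟩ : ℍ[A,-1,0,-1])) ↔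
      ∃ f₀ ρ u w : A, (h₀ ^ 2 + h₁ ^ 2) * u = ρ * (h₀ ^ 2 - h₁ ^ 2) ∧
        (h₀ ^ 2 + h₁ ^ 2) * w = ρ * h₀ * h₁ ∧ c = ⟨f₀, a * ρ, b * u, -(2 * (b * w))⟩ := by
  have hb₀ : b ≠ 0 := right_ne_zero_of_mul hb.ne_zero
  simp only [mk_mul_mul_star_mk, mk.injEq]
  constructor
  · rintro ⟨α, β, -, h₁eq, h₂eq, h₃eq⟩
    obtain ⟨ρ, hρ⟩ := ha.dvd (a := c.imI)
    obtain ⟨u, hu⟩ := (isUnit_of_mul_isUnit_right hb).dvd (a := c.imJ)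
    obtain ⟨w, hw⟩ := hb.dvd (a := -c.imK)
    have hβ : β = (h₀ ^ 2 + h₁ ^ 2) * ρ :=
      mul_right_cancel₀ ha.ne_zero (by linear_combination -h₁eq + (h₀ ^ 2 + h₁ ^ 2) * hρ)
    have hw' : c.imK = -(2 * (b * w)) := by linear_combination -hw
    rw [hβ] at h₂eq
    rw [hu, hw'] at h₂eq h₃eq
    refine ⟨c.re, ρ, u, w, ?_, ?_, by ext <;> simp [hρ, hu, hw']⟩
    · refine mul_left_cancel₀ (mul_ne_zero hs hb₀) ?_
      linear_combination (h₀ ^ 2 - h₁ ^ 2) * h₂eq + (2 * h₀ * h₁) * h₃eq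
    · refine mul_left_cancel₀ (mul_ne_zero hb.ne_zero hs) ?_
      linear_combination (2 * h₀ * h₁) * h₂eq - (h₀ ^ 2 - h₁ ^ 2) * h₃eq
  · rintro ⟨f₀, ρ, u, w, hu, hw, rfl⟩
    refine ⟨(h₀ ^ 2 + h₁ ^ 2) * f₀, (h₀ ^ 2 + h₁ ^ 2) * ρ, rfl, by ring, ?_, ?_⟩
    · refine mul_left_cancel₀ hs ?_
      linear_combination (b * (h₀ ^ 2 - h₁ ^ 2)) * hu + (4 * b * h₀ * h₁) * hw
    · refine mul_left_cancel₀ hs ?_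
      linear_combination (-2 * b * (h₀ ^ 2 - h₁ ^ 2)) * hw + (2 * b * h₀ * h₁) * hu

end QuaternionAlgebra

namespace QuaternionAlgebra.Basis

section Pure

variable {R : Type*} [CommRing R] (B : Basis ℍ[R] (-1 : R) 0 (-1))

theorem liftHom_mk (c₀ c₁ c₂ c₃ : R) :
    liftHom B ⟨c₀, c₁, c₂, c₃⟩ = (c₀ : ℍ[R]) + c₁ * B.i + c₂ * B.j + c₃ * B.k := by
  simp [lift, Quaternion.coe_mul_eq_smul, Quaternion.algebraMap_def]

variable (hi : B.i.re = 0) (hj : B.j.re = 0) (hk : B.k.re = 0)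
include hi hj hk

theorem re_liftHom (x : ℍ[R,-1,0,-1]) : (liftHom B x).re = x.re := by
  simp [lift, hi, hj, hk]

theorem star_liftHom (x : ℍ[R,-1,0,-1]) : star (liftHom B x) = liftHom B (star x) := by
  ext <;> simp [lift, hi, hj, hk]

theorem liftHom_injective : Function.Injective (liftHom B) := by
  refine (injective_iff_map_eq_zero _).mpr fun x hx => ?_
  have hre : ∀ y, (x * y).re = 0 := fun y => by
    rw [← B.re_liftHom hi hj hk, map_mul, hx, zero_mul, Quaternion.re_zero]
  ext
  · simpa using hre 1
  · simpa using hre ⟨0, -1, 0, 0⟩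
  · simpa using hre ⟨0, 0, -1, 0⟩
  · simpa using hre ⟨0, 0, 0, -1⟩

end Pure

variable {A : Type*} [CommRing A] [Algebra ℝ A] (B : Basis ℍ[ℝ] (-1 : ℝ) 0 (-1))

variable (A) in
@[simps]
noncomputable def baseChange : Basis ℍ[A] (-1 : A) 0 (-1) where
  i := qmap B.i
  j := qmap B.j
  k := qmap B.k
  i_mul_i := by
    rw [← qmap_mul, B.i_mul_i]
    ext <;> simp
  j_mul_j := by
    rw [← qmap_mul, B.j_mul_j]
    ext <;> simp
  i_mul_j := by rw [← qmap_mul, B.i_mul_j]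
  j_mul_i := by
    rw [← qmap_mul, B.j_mul_i]
    ext <;> simp

theorem liftHom_baseChange_mk (x : ℍ[ℝ,-1,0,-1]) :
    liftHom (B.baseChange A)
      ⟨algebraMap ℝ A x.re, algebraMap ℝ A x.imI, algebraMap ℝ A x.imJ, algebraMap ℝ A x.imK⟩
      = qmap (liftHom B x) := by
  ext <;> simp [lift, Algebra.smul_def]

variable (hi : B.i.re = 0) (hj : B.j.re = 0) (hk : B.k.re = 0)
include hi hj hk

theorem liftHom_baseChange_injective : Function.Injective (liftHom (B.baseChange A)) :=
  liftHom_injective _ (by simp [hi]) (by simp [hj]) (by simp [hk])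

theorem liftHom_baseChange_surjective : Function.Surjective (liftHom (B.baseChange A)) := by
  have hB : Function.Surjective (liftHom B) :=
    LinearMap.injective_iff_surjective (f := (liftHom B).toLinearMap).mp
      (B.liftHom_injective hi hj hk)
  choose y hy using hB
  let ι (x : ℍ[ℝ,-1,0,-1]) : ℍ[A,-1,0,-1] :=
    ⟨algebraMap ℝ A x.re, algebraMap ℝ A x.imI, algebraMap ℝ A x.imJ, algebraMap ℝ A x.imK⟩
  let e (t : Fin 4) : ℍ[ℝ] := (Quaternion.equivTuple ℝ).symm (Pi.single t 1)
  intro q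
  refine ⟨algebraMap A _ q.re + q.imI • ι (y (e 1)) + q.imJ • ι (y (e 2))
    + q.imK • ι (y (e 3)), ?_⟩
  simp only [map_add, map_smul, AlgHom.commutes, ι, liftHom_baseChange_mk, hy]
  ext <;> simp <;> simp [e]

theorem isSliced_liftHom_baseChange_iff {M : ℍ[ℝ]} {a b : ℝ} (hM : M = a • B.i + b • B.j)
    (x : ℍ[A,-1,0,-1]) :
    IsSliced M (liftHom (B.baseChange A) x) ↔
      ∃ α β : A, x = ⟨α, β * algebraMap ℝ A a, β * algebraMap ℝ A b, 0⟩ := by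
  have hsliced (α β : A) : (α : ℍ[A]) + (β : ℍ[A]) * qmap M =
      liftHom (B.baseChange A) ⟨α, β * algebraMap ℝ A a, β * algebraMap ℝ A b, 0⟩ := by
    rw [liftHom_mk, hM]
    ext <;> simp <;> ring
  simp only [IsSliced, hsliced, (B.liftHom_baseChange_injective hi hj hk).eq_iff]

theorem isSliced_conj_iff [IsDomain A] {M : ℍ[ℝ]} {a b : ℝ} (hM : M = a • B.i + b • B.j)
    (ha : a ≠ 0) (hb : b ≠ 0) {h₀ h₁ : A} (hs : h₀ ^ 2 + h₁ ^ 2 ≠ 0) (f : ℍ[A]) :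
    IsSliced M (((h₀ : ℍ[A]) + (h₁ : ℍ[A]) * qmap B.i) * f *
      star ((h₀ : ℍ[A]) + (h₁ : ℍ[A]) * qmap B.i)) ↔
      ∃ f₀ ρ u w : A, (h₀ ^ 2 + h₁ ^ 2) * u = ρ * (h₀ ^ 2 - h₁ ^ 2) ∧
        (h₀ ^ 2 + h₁ ^ 2) * w = ρ * h₀ * h₁ ∧
        f = (f₀ : ℍ[A]) + ((algebraMap ℝ A a * ρ : A) : ℍ[A]) * qmap B.i
          + ((algebraMap ℝ A b * u : A) : ℍ[A]) * qmap B.j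
          - ((2 * (algebraMap ℝ A b * w) : A) : ℍ[A]) * qmap B.k := by
  obtain ⟨c, rfl⟩ := B.liftHom_baseChange_surjective hi hj hk f
  have hh : (h₀ : ℍ[A]) + (h₁ : ℍ[A]) * qmap B.i = liftHom (B.baseChange A) ⟨h₀, h₁, 0, 0⟩ := by
    rw [liftHom_mk]
    simp
  have hf (f₀ c₁ c₂ c₃ : A) : (f₀ : ℍ[A]) + (c₁ : ℍ[A]) * qmap B.i + (c₂ : ℍ[A]) * qmap B.j
      - (c₃ : ℍ[A]) * qmap B.k = liftHom (B.baseChange A) ⟨f₀, c₁, c₂, -c₃⟩ := by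
    rw [liftHom_mk]
    simp [sub_eq_add_neg]
  rw [hh, star_liftHom _ (by simp [hi]) (by simp [hj]) (by simp [hk]), ← map_mul, ← map_mul,
    B.isSliced_liftHom_baseChange_iff hi hj hk hM]
  simp only [hf, (B.liftHom_baseChange_injective hi hj hk).eq_iff]
  refine exists_mk_mul_mul_star_mk_eq_iff ((isUnit_iff_ne_zero.mpr ha).map _) ?_ hs c
  rw [← map_ofNat (algebraMap ℝ A) 2, ← map_mul]
  exact (isUnit_iff_ne_zero.mpr (mul_ne_zero two_ne_zero hb)).map _

end QuaternionAlgebra.Basis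

theorem conjugated_sliced_iff_nonorthogonal_case_general
    {A : Type*} [CommRing A] [IsDomain A] [Algebra ℝ A] (hFR : FormallyRealFour A)
    (I₀ M₀ : Quaternion ℝ) (hI₀ : IsImaginaryUnit I₀) (hM₀ : IsImaginaryUnit M₀)
    (hind : LinearIndependent ℝ ![I₀, M₀])
    (a b : ℝ) (J₀ K₀ : Quaternion ℝ)
    (ha : a = I₀.imI * M₀.imI + I₀.imJ * M₀.imJ + I₀.imK * M₀.imK)
    (hb : b = Real.sqrt (1 - a ^ 2))
    (hK₀ : K₀ = (2 * b)⁻¹ • (I₀ * M₀ - M₀ * I₀))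
    (hJ₀ : J₀ = K₀ * I₀)
    (hanz : a ≠ 0)
    (h₀ h₁ : A) (hh₁ : h₁ ≠ 0) (h : Quaternion A)
    (hh : h = (h₀ : Quaternion A) + (h₁ : Quaternion A) * qmap I₀)
    (hs : A) (hhs : hs = h₀ ^ 2 + h₁ ^ 2)
    (f : Quaternion A) :
    IsSliced M₀ (h * f * star h) ↔
      ∃ f₀ ρ u w : A,
        hs * u = ρ * (h₀ ^ 2 - h₁ ^ 2) ∧
        hs * w = ρ * h₀ * h₁ ∧
        f = (f₀ : Quaternion A)
            + ((algebraMap ℝ A a * ρ : A) : Quaternion A) * qmap I₀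
            + ((algebraMap ℝ A b * u : A) : Quaternion A) * qmap J₀
            - ((2 * (algebraMap ℝ A b * w) : A) : Quaternion A) * qmap K₀ := by
  subst hh hhs hJ₀
  have hIM : I₀ * M₀ + M₀ * I₀ = (-(2 * a)) • 1 := ha ▸ mul_add_mul_of_re_eq_zero hI₀.1 hM₀.1
  have hab := one_sub_sq_pos hI₀ hM₀ hind hIM
  have hb₀ : b ≠ 0 := hb ▸ (Real.sqrt_pos.mpr hab).ne'
  have hKK := mul_self_eq_neg_one_of_eq_commutator hI₀.mul_self hM₀.mul_self hIM hK₀ hb₀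
    (hb ▸ Real.sq_sqrt hab.le)
  have hM := eq_smul_add_smul_of_eq_commutator hI₀.mul_self hIM hK₀ hb₀
  have hKre : K₀.re = 0 := by
    rw [hK₀]
    simp only [re_smul, re_sub, re_mul]
    ring
  have hJre : (K₀ * I₀).re = 0 := by
    have hre := congrArg QuaternionAlgebra.re hM
    simp only [re_add, re_smul, hI₀.1, hM₀.1, smul_eq_mul, mul_zero, zero_add] at hre
    exact (mul_eq_zero.mp hre.symm).resolve_left hb₀
  have hIK := mul_eq_neg_mul_of_eq_commutator hI₀.mul_self hIM hK₀
  exact (Basis.ofAnticomm (S := ℝ) hI₀.mul_self hKK hIK).isSliced_conj_iff hI₀.1 hJre hKre hM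
    hanz hb₀ (hFR.sq_add_sq_ne_zero hh₁) f

theorem conjugated_sliced_iff_nonorthogonal_case
    {A : Type*} [CommRing A] [IsDomain A] [Algebra ℝ A] (hFR : FormallyRealFour A)
    (I₀ M₀ : Quaternion ℝ) (hI₀ : IsImaginaryUnit I₀) (hM₀ : IsImaginaryUnit M₀)
    (hind : LinearIndependent ℝ ![I₀, M₀])
    (a b : ℝ) (J₀ K₀ : Quaternion ℝ)
    (ha : a = I₀.imI * M₀.imI + I₀.imJ * M₀.imJ + I₀.imK * M₀.imK)
    (hb : b = Real.sqrt (1 - a ^ 2))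
    (hK₀ : K₀ = (2 * b)⁻¹ • (I₀ * M₀ - M₀ * I₀))
    (hJ₀ : J₀ = K₀ * I₀)
    (hanz : a ≠ 0)
    (h₀ h₁ : A) (hh₁ : h₁ ≠ 0) (h : Quaternion A)
    (hh : h = (h₀ : Quaternion A) + (h₁ : Quaternion A) * qmap I₀)
    (hs : A) (hhs : hs = h₀ ^ 2 + h₁ ^ 2)
    (f : Quaternion A) (hf : ¬ IsSliced I₀ f) :
    IsSliced M₀ (h * f * star h) ↔
      ∃ f₀ ρ u w : A,
        hs * u = ρ * (h₀ ^ 2 - h₁ ^ 2) ∧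
        hs * w = ρ * h₀ * h₁ ∧
        f = (f₀ : Quaternion A)
            + ((algebraMap ℝ A a * ρ : A) : Quaternion A) * qmap I₀
            + ((algebraMap ℝ A b * u : A) : Quaternion A) * qmap J₀
            - ((2 * (algebraMap ℝ A b * w) : A) : Quaternion A) * qmap K₀ :=
  conjugated_sliced_iff_nonorthogonal_case_general hFR I₀ M₀ hI₀ hM₀ hind a b J₀ K₀ ha hb hK₀ hJ₀
    hanz h₀ h₁ hh₁ h hh hs hhs f
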